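/- Let θ ∈ ℝ and s, w ∈ ℝ^m. The vector φ = (P s; Q w) ∈ ℝ^{M+N} satisfies the harmonic Petrov–Galerkin condition (Ã − θ I) φ ⟂ Ã (P x; Q y) for all x, y ∈ ℝ^m if and only if θ·(B w) = (B Bᵀ + β² e_m e_mᵀ) s and θ·(Bᵀ s) = Bᵀ B w. -/

import Mathlib

open Matrix

noncomputable def eNormR {ι : Type*} [Fintype ι] (v : ι → ℝ) : ℝ :=
  Real.sqrt (∑ i, v i ^ 2)

def eLast (m : ℕ) : Fin m → ℝ := fun i => if (i : ℕ) = m - 1 then 1 else 0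

def HarmonicPencil {m : ℕ} (B : Matrix (Fin m) (Fin m) ℝ) (β θ : ℝ)
    (s w : Fin m → ℝ) : Prop :=
  θ • B.mulVec w = (B * Bᵀ + β ^ 2 • vecMulVec (eLast m) (eLast m)).mulVec s ∧
  θ • Bᵀ.mulVec s = (Bᵀ * B).mulVec w

noncomputable def specNorm {m n : Type*} [Fintype m] [Fintype n] [DecidableEq n]
    (A : Matrix m n ℝ) : ℝ :=
  ‖LinearMap.toContinuousLinearMap (Matrix.toEuclideanLin A)‖

noncomputable def sep {n : Type*} [Fintype n] [DecidableEq n] (a : ℝ) (G : Matrix n n ℝ) : ℝ :=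
  sInf {r | ∃ x : n → ℝ, eNormR x = 1 ∧ r = eNormR ((a • (1 : Matrix n n ℝ) - G).mulVec x)}

noncomputable def sigmaMin {m n : Type*} [Fintype m] [Fintype n] (C : Matrix m n ℝ) : ℝ :=
  sSup {c | 0 ≤ c ∧ ∀ h, c * eNormR h ≤ eNormR (C.mulVec h)}

noncomputable def sinAngleVec {ι : Type*} [Fintype ι] (x y : ι → ℝ) : ℝ :=
  Real.sqrt (1 - (x ⬝ᵥ y) ^ 2 / (eNormR x ^ 2 * eNormR y ^ 2))

noncomputable def toE {ι : Type*} (v : ι → ℝ) : EuclideanSpace ℝ ι :=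
  (WithLp.equiv 2 (ι → ℝ)).symm v

noncomputable def ofE {ι : Type*} (v : EuclideanSpace ℝ ι) : ι → ℝ :=
  WithLp.equiv 2 (ι → ℝ) v

noncomputable def sinAngleSub {ι : Type*} [Fintype ι] (x : EuclideanSpace ℝ ι)
    (E : Submodule ℝ (EuclideanSpace ℝ ι)) : ℝ :=
  ‖x - (E.orthogonalProjection x : EuclideanSpace ℝ ι)‖ / ‖x‖

def Atilde {M N : ℕ} (A : Matrix (Fin M) (Fin N) ℝ) :
    Matrix (Fin M ⊕ Fin N) (Fin M ⊕ Fin N) ℝ :=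
  fromBlocks 0 A Aᵀ 0

def Btilde {m : ℕ} (B : Matrix (Fin m) (Fin m) ℝ) :
    Matrix (Fin m ⊕ Fin m) (Fin m ⊕ Fin m) ℝ :=
  fromBlocks 0 B Bᵀ 0

noncomputable def Ctilde {m : ℕ} (B : Matrix (Fin m) (Fin m) ℝ) (β : ℝ) :
    Matrix (Fin m ⊕ Fin m) (Fin m ⊕ Fin m) ℝ :=
  fromBlocks (B * Bᵀ + β ^ 2 • vecMulVec (eLast m) (eLast m)) 0 0 (Bᵀ * B)

noncomputable def colSpanE {M N m : ℕ} (P : Matrix (Fin M) (Fin m) ℝ)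
    (Q : Matrix (Fin N) (Fin m) ℝ) : Submodule ℝ (EuclideanSpace ℝ (Fin M ⊕ Fin N)) :=
  Submodule.span ℝ {z | ∃ x y : Fin m → ℝ, z = toE (Sum.elim (P.mulVec x) (Q.mulVec y))}

noncomputable def Mrho {m : ℕ} (B : Matrix (Fin m) (Fin m) ℝ) (β ρ : ℝ) :
    Matrix ((Fin m ⊕ Fin m) ⊕ Unit) (Fin m ⊕ Fin m) ℝ :=
  Matrix.fromRows
    (fromBlocks (-(ρ • (1 : Matrix (Fin m) (Fin m) ℝ))) B Bᵀ (-(ρ • 1)))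
    (Matrix.of fun (_ : Unit) j => Sum.elim (β • eLast m) (0 : Fin m → ℝ) j)

/-! The Lanczos relations give `Ã (P u; Q v) = (P B v; Q Bᵀ u + β (e_mᵀ u) q)`. The columns
of `P` are orthonormal, and so are those of `Q` together with `q`, so every inner product in the
Petrov–Galerkin condition collapses to one in `ℝ^m`. The condition then reads
`r₁ ⬝ x + r₂ ⬝ y = 0` for all `x, y`, where `r₁, r₂` are the residuals of the two equations of
the harmonic pencil. -/

section Orthonormal

variable {ι κ : Type*} [Fintype ι] [Fintype κ]

theorem dotProduct_self_eq_one_of_eNormR_eq_one {v : ι → ℝ} (hv : eNormR v = 1) :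
    v ⬝ᵥ v = 1 := by
  have hsum : ∑ i, v i ^ 2 = 1 := Real.sqrt_eq_one.mp hv
  simpa only [dotProduct, pow_two] using hsum

theorem mulVec_dotProduct_mulVec_of_transpose_mul_self [DecidableEq κ] {P : Matrix ι κ ℝ}
    (hP : Pᵀ * P = 1) (u v : κ → ℝ) : P *ᵥ u ⬝ᵥ P *ᵥ v = u ⬝ᵥ v := by
  rw [dotProduct_mulVec, ← mulVec_transpose, mulVec_mulVec, hP, one_mulVec]

theorem dotProduct_mulVec_eq_zero_of_transpose_mulVec_eq_zero {Q : Matrix ι κ ℝ} {q : ι → ℝ}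
    (hQq : Qᵀ *ᵥ q = 0) (v : κ → ℝ) : q ⬝ᵥ Q *ᵥ v = 0 := by
  rw [dotProduct_mulVec, ← mulVec_transpose, hQq, zero_dotProduct]

theorem mulVec_dotProduct {α : Type*} [CommSemiring α] (C : Matrix ι κ α) (u : κ → α)
    (v : ι → α) : C *ᵥ u ⬝ᵥ v = u ⬝ᵥ Cᵀ *ᵥ v := by
  rw [dotProduct_mulVec, vecMul_transpose]

theorem forall_dotProduct_add_dotProduct_eq_zero_iff {a : ι → ℝ} {b : κ → ℝ} :
    (∀ x y, a ⬝ᵥ x + b ⬝ᵥ y = 0) ↔ a = 0 ∧ b = 0 := by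
  refine ⟨fun h => ⟨?_, ?_⟩, fun ⟨ha, hb⟩ x y => by simp [ha, hb]⟩
  · simpa using h a 0
  · simpa using h 0 b

variable {μ ν : Type*} [Fintype μ] [Fintype ν] [DecidableEq μ] [DecidableEq ν]
  {P : Matrix ι μ ℝ} {Q : Matrix κ ν ℝ} {q : κ → ℝ}

theorem sumElim_dotProduct_sumElim_add_smul (hP : Pᵀ * P = 1) (hQ : Qᵀ * Q = 1)
    (hQq : Qᵀ *ᵥ q = 0) (u u' : μ → ℝ) (v v' : ν → ℝ) (c : ℝ) :
    Sum.elim (P *ᵥ u) (Q *ᵥ v) ⬝ᵥ Sum.elim (P *ᵥ u') (Q *ᵥ v' + c • q)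
      = u ⬝ᵥ u' + v ⬝ᵥ v' := by
  rw [sumElim_dotProduct_sumElim, dotProduct_add, dotProduct_smul, dotProduct_comm _ q,
    dotProduct_mulVec_eq_zero_of_transpose_mulVec_eq_zero hQq,
    mulVec_dotProduct_mulVec_of_transpose_mul_self hP,
    mulVec_dotProduct_mulVec_of_transpose_mul_self hQ, smul_zero, add_zero]

theorem sumElim_add_smul_dotProduct_sumElim_add_smul (hP : Pᵀ * P = 1) (hQ : Qᵀ * Q = 1)
    (hq : eNormR q = 1) (hQq : Qᵀ *ᵥ q = 0) (u u' : μ → ℝ) (v v' : ν → ℝ) (c c' : ℝ) :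
    Sum.elim (P *ᵥ u) (Q *ᵥ v + c • q) ⬝ᵥ Sum.elim (P *ᵥ u') (Q *ᵥ v' + c' • q)
      = u ⬝ᵥ u' + v ⬝ᵥ v' + c * c' := by
  have hqQ (v : ν → ℝ) : Q *ᵥ v ⬝ᵥ q = 0 := by
    rw [dotProduct_comm, dotProduct_mulVec_eq_zero_of_transpose_mulVec_eq_zero hQq]
  rw [sumElim_dotProduct_sumElim]
  simp only [dotProduct_add, add_dotProduct, dotProduct_smul, smul_dotProduct, hqQ,
    dotProduct_mulVec_eq_zero_of_transpose_mulVec_eq_zero hQq,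
    mulVec_dotProduct_mulVec_of_transpose_mul_self hP,
    mulVec_dotProduct_mulVec_of_transpose_mul_self hQ,
    dotProduct_self_eq_one_of_eNormR_eq_one hq, smul_eq_mul]
  ring

end Orthonormal

section Lanczos

variable {M N m : ℕ} {A : Matrix (Fin M) (Fin N) ℝ}
  {P : Matrix (Fin M) (Fin m) ℝ} {Q : Matrix (Fin N) (Fin m) ℝ}
  {B : Matrix (Fin m) (Fin m) ℝ} {β : ℝ} {q : Fin N → ℝ}

theorem Atilde_mulVec_sumElim (hAQ : A * Q = P * B)
    (hAP : Aᵀ * P = Q * Bᵀ + β • vecMulVec q (eLast m)) (u v : Fin m → ℝ) :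
    Atilde A *ᵥ Sum.elim (P *ᵥ u) (Q *ᵥ v)
      = Sum.elim (P *ᵥ B *ᵥ v) (Q *ᵥ Bᵀ *ᵥ u + (β * (eLast m ⬝ᵥ u)) • q) := by
  rw [Atilde, fromBlocks_mulVec]
  simp only [Sum.elim_comp_inl, Sum.elim_comp_inr, Matrix.zero_mul, zero_mulVec, zero_add,
    add_zero, mulVec_mulVec, hAQ, hAP, add_mulVec, smul_mulVec, vecMulVec_mulVec,
    op_smul_eq_smul, smul_smul]

theorem Atilde_residual_dotProduct (hP : Pᵀ * P = 1) (hQ : Qᵀ * Q = 1) (hq : eNormR q = 1)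
    (hQq : Qᵀ *ᵥ q = 0) (hAQ : A * Q = P * B)
    (hAP : Aᵀ * P = Q * Bᵀ + β • vecMulVec q (eLast m)) (θ : ℝ) (s w x y : Fin m → ℝ) :
    (Atilde A *ᵥ Sum.elim (P *ᵥ s) (Q *ᵥ w) - θ • Sum.elim (P *ᵥ s) (Q *ᵥ w)) ⬝ᵥ
        Atilde A *ᵥ Sum.elim (P *ᵥ x) (Q *ᵥ y)
      = ((B * Bᵀ + β ^ 2 • vecMulVec (eLast m) (eLast m)) *ᵥ s - θ • B *ᵥ w) ⬝ᵥ x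
        + ((Bᵀ * B) *ᵥ w - θ • Bᵀ *ᵥ s) ⬝ᵥ y := by
  rw [sub_dotProduct, smul_dotProduct, Atilde_mulVec_sumElim hAQ hAP x y,
    Atilde_mulVec_sumElim hAQ hAP s w, sumElim_dotProduct_sumElim_add_smul hP hQ hQq,
    sumElim_add_smul_dotProduct_sumElim_add_smul hP hQ hq hQq]
  simp only [sub_dotProduct, add_dotProduct, smul_dotProduct, add_mulVec, smul_mulVec,
    vecMulVec_mulVec, op_smul_eq_smul, ← mulVec_mulVec, mulVec_dotProduct, transpose_transpose,
    smul_eq_mul]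
  ring

end Lanczos

theorem stmt3_general (m M N : ℕ)
    (A : Matrix (Fin M) (Fin N) ℝ)
    (P : Matrix (Fin M) (Fin m) ℝ) (Q : Matrix (Fin N) (Fin m) ℝ)
    (hP : Pᵀ * P = 1) (hQ : Qᵀ * Q = 1)
    (B : Matrix (Fin m) (Fin m) ℝ) (β : ℝ) (q : Fin N → ℝ)
    (hq : eNormR q = 1) (hQq : Qᵀ.mulVec q = 0)
    (hAQ : A * Q = P * B)
    (hAP : Aᵀ * P = Q * Bᵀ + β • vecMulVec q (eLast m))
    (θ : ℝ) (s w : Fin m → ℝ) :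
    (∀ x y : Fin m → ℝ,
      ((Atilde A).mulVec (Sum.elim (P.mulVec s) (Q.mulVec w))
          - θ • Sum.elim (P.mulVec s) (Q.mulVec w)) ⬝ᵥ
        (Atilde A).mulVec (Sum.elim (P.mulVec x) (Q.mulVec y)) = 0)
    ↔ HarmonicPencil B β θ s w := by
  simp_rw [Atilde_residual_dotProduct hP hQ hq hQq hAQ hAP]
  rw [forall_dotProduct_add_dotProduct_eq_zero_iff, sub_eq_zero, sub_eq_zero, HarmonicPencil]
  exact and_congr eq_comm eq_comm

theorem stmt3 (m M N : ℕ) (hm : 0 < m)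
    (A : Matrix (Fin M) (Fin N) ℝ)
    (P : Matrix (Fin M) (Fin m) ℝ) (Q : Matrix (Fin N) (Fin m) ℝ)
    (hP : Pᵀ * P = 1) (hQ : Qᵀ * Q = 1)
    (B : Matrix (Fin m) (Fin m) ℝ) (β : ℝ) (q : Fin N → ℝ)
    (hq : eNormR q = 1) (hQq : Qᵀ.mulVec q = 0)
    (hAQ : A * Q = P * B)
    (hAP : Aᵀ * P = Q * Bᵀ + β • vecMulVec q (eLast m))
    (θ : ℝ) (s w : Fin m → ℝ) :
    (∀ x y : Fin m → ℝ,
      ((Atilde A).mulVec (Sum.elim (P.mulVec s) (Q.mulVec w))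
          - θ • Sum.elim (P.mulVec s) (Q.mulVec w)) ⬝ᵥ
        (Atilde A).mulVec (Sum.elim (P.mulVec x) (Q.mulVec y)) = 0)
    ↔ HarmonicPencil B β θ s w :=
  stmt3_general m M N A P Q hP hQ B β q hq hQq hAQ hAP θ s w
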